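/- arXiv:2510.04621 — 7 statements merged into one kernel-verified Lean document; each statement's English description precedes it below -/
import Mathlib

section
/- Let G be a finite bipartite graph, let (b, w) be a maxbisize of G, let C be the vertex set of a biclique of G of size (b, w), and let M ⊆ B ∪ W be a set such that M is fully adjacent to C \ M. Then the pair (|B ∩ M ∩ C|, |W ∩ M ∩ C|) belongs to D(M). -/
open Finset

/-- A finite bipartite graph: black vertices `B`, white vertices `W` (disjoint finite sets),
and an edge set `E ⊆ B × W`. -/
structure BipGraph (V : Type) [DecidableEq V] where
  B : Finset V
  W : Finset V
  disj : Disjoint B W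
  E : Set (V × V)
  E_sub : ∀ e ∈ E, e.1 ∈ B ∧ e.2 ∈ W

variable {V : Type} [DecidableEq V]

/-- `(S, T)` is a biclique of `G`. -/
def IsBiclique (G : BipGraph V) (S T : Finset V) : Prop :=
  S ⊆ G.B ∧ T ⊆ G.W ∧ ∀ b ∈ S, ∀ w ∈ T, (b, w) ∈ G.E

/-- `(b, w)` is a bisize of `G`: `G` contains a biclique of size `(b, w)`. -/
def Bisize (G : BipGraph V) (p : ℕ × ℕ) : Prop :=
  ∃ S T, IsBiclique G S T ∧ S.card = p.1 ∧ T.card = p.2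

/-- `Dominates p q` : `p` dominates `q`, i.e. `q.1 ≤ p.1` and `q.2 ≤ p.2`. -/
def Dominates (p q : ℕ × ℕ) : Prop := q.1 ≤ p.1 ∧ q.2 ≤ p.2

/-- A maxbisize of `G` : a bisize not strictly dominated by another bisize. -/
def MaxBisize (G : BipGraph V) (p : ℕ × ℕ) : Prop :=
  Bisize G p ∧ ∀ q, Bisize G q → Dominates q p → q = p

/-- `DD G` is the set of maxbisizes of `G` (denoted `D(G)` in the paper). -/
def DD (G : BipGraph V) : Set (ℕ × ℕ) := {p | MaxBisize G p}

/-- `Dom X` : the elements of `X` not strictly dominated by another element of `X`. -/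
def Dom (X : Set (ℕ × ℕ)) : Set (ℕ × ℕ) := {p ∈ X | ∀ q ∈ X, Dominates q p → q = p}

/-- The induced subgraph `G[M]`. -/
def induce (G : BipGraph V) (M : Finset V) : BipGraph V where
  B := G.B ∩ M
  W := G.W ∩ M
  disj := G.disj.mono inter_subset_left inter_subset_left
  E := {e ∈ G.E | e.1 ∈ M ∧ e.2 ∈ M}
  E_sub := fun e he =>
    ⟨mem_inter.mpr ⟨(G.E_sub e he.1).1, he.2.1⟩, mem_inter.mpr ⟨(G.E_sub e he.1).2, he.2.2⟩⟩

/-- `X` is nonadjacent to `Y` : no vertex of `X` is adjacent to a vertex of `Y`. -/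
def Nonadj (G : BipGraph V) (X Y : Finset V) : Prop :=
  ∀ x ∈ X, ∀ y ∈ Y, (x, y) ∉ G.E ∧ (y, x) ∉ G.E

/-- `X` is fully adjacent to `Y` : every black vertex of `X` is adjacent to every white
vertex of `Y` and every white vertex of `X` is adjacent to every black vertex of `Y`. -/
def FullyAdj (G : BipGraph V) (X Y : Finset V) : Prop :=
  (∀ b ∈ X ∩ G.B, ∀ w ∈ Y ∩ G.W, (b, w) ∈ G.E) ∧
  (∀ b ∈ Y ∩ G.B, ∀ w ∈ X ∩ G.W, (b, w) ∈ G.E)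

/-- `X` is left adjacent to `Y` : every black vertex of `X` is adjacent to every white
vertex of `Y` and no white vertex of `X` is adjacent to a black vertex of `Y`. -/
def LeftAdj (G : BipGraph V) (X Y : Finset V) : Prop :=
  (∀ b ∈ X ∩ G.B, ∀ w ∈ Y ∩ G.W, (b, w) ∈ G.E) ∧
  (∀ b ∈ Y ∩ G.B, ∀ w ∈ X ∩ G.W, (b, w) ∉ G.E)

open Classical in
/-- `X ⊕ Y` with the convention `∅ ⊕ X = X ⊕ ∅ = X`. -/
noncomputable def oplus (X Y : Set (ℕ × ℕ)) : Set (ℕ × ℕ) :=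
  if X = ∅ then Y else if Y = ∅ then X
  else {p | ∃ x ∈ X, ∃ y ∈ Y, p = x + y}

/-- `→_w^z X`. -/
def shiftW (z : ℕ) (X : Set (ℕ × ℕ)) : Set (ℕ × ℕ) := {p | ∃ q ∈ X, p = (q.1, q.2 + z)}

/-- `→_b^z X`. -/
def shiftB (z : ℕ) (X : Set (ℕ × ℕ)) : Set (ℕ × ℕ) := {p | ∃ q ∈ X, p = (q.1 + z, q.2)}

/-- A bimodule of `G`. -/
def Bimodule (G : BipGraph V) (M : Finset V) : Prop :=
  M ⊆ G.B ∪ G.W ∧ ∀ v ∈ (G.B ∪ G.W) \ M, Nonadj G {v} M ∨ FullyAdj G {v} M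

/-- The quotient graph of `G` by a family `M` of bimodules: vertex `(i, true)` is the
black vertex `bᵢ` (present when `Mᵢ ∩ B ≠ ∅`), `(i, false)` the white vertex `wᵢ`. -/
def quotientGraph (G : BipGraph V) {k : ℕ} (M : Fin k → Finset V) :
    BipGraph (Fin k × Bool) where
  B := Finset.univ.filter fun p => p.2 = true ∧ (M p.1 ∩ G.B).Nonempty
  W := Finset.univ.filter fun p => p.2 = false ∧ (M p.1 ∩ G.W).Nonempty
  disj := by
    rw [Finset.disjoint_left]
    intro p hp hq
    simp only [Finset.mem_filter, Finset.mem_univ, true_and] at hp hq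
    rw [hp.1] at hq
    exact Bool.noConfusion hq.1
  E := {e | e.1.2 = true ∧ e.2.2 = false ∧
       ∃ x ∈ M e.1.1 ∩ G.B, ∃ y ∈ M e.2.1 ∩ G.W, (x, y) ∈ G.E}
  E_sub := fun e he => by
    obtain ⟨h1, h2, x, hx, y, hy, _⟩ := he
    constructor <;> simp only [Finset.mem_filter, Finset.mem_univ, true_and]
    · exact ⟨h1, ⟨x, hx⟩⟩
    · exact ⟨h2, ⟨y, hy⟩⟩

/-- `Rroc S` for a set `S` of vertices of the quotient graph. -/
def Rroc (G : BipGraph V) {k : ℕ} (M : Fin k → Finset V)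
    (S : Finset (Fin k × Bool)) : Finset V :=
  S.biUnion fun p => if p.2 then M p.1 ∩ G.B else M p.1 ∩ G.W

/-- `Corr S` for a set `S` of vertices of `G`. -/
def Corr (G : BipGraph V) {k : ℕ} (M : Fin k → Finset V) (C : Finset V) :
    Finset (Fin k × Bool) :=
  Finset.univ.filter fun p =>
    if p.2 then (C ∩ M p.1 ∩ G.B).Nonempty else (C ∩ M p.1 ∩ G.W).Nonempty

/-- `C` is the vertex set of a biclique of `G`. -/
def IsBicliqueVS (G : BipGraph V) (C : Finset V) : Prop :=
  ∃ S T, IsBiclique G S T ∧ S ∪ T = C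

/-- `C` is the vertex set of a maximal biclique of `G`. -/
def MaximalBicliqueVS (G : BipGraph V) (C : Finset V) : Prop :=
  IsBicliqueVS G C ∧ ∀ D, IsBicliqueVS G D → C ⊆ D → C = D

/-- `D_C(Mᵢ)`, the maxbisize set of the bimodule `Mᵢ` with respect to a maximal
biclique `C` of the quotient graph. -/
def DC (G : BipGraph V) {k : ℕ} (M : Fin k → Finset V)
    (C : Finset (Fin k × Bool)) (i : Fin k) : Set (ℕ × ℕ) :=
  if (i, true) ∈ C then
    if (i, false) ∈ C then DD (induce G (M i))
    else {((M i ∩ G.B).card, 0)}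
  else
    if (i, false) ∈ C then {(0, (M i ∩ G.W).card)}
    else ∅

/-- `f 0 ⊕ f 1 ⊕ … ⊕ f (k-1)` (with the convention that `∅` is neutral for `⊕`). -/
noncomputable def oplusFold {k : ℕ} (f : Fin k → Set (ℕ × ℕ)) : Set (ℕ × ℕ) :=
  (List.finRange k).foldr (fun i acc => oplus (f i) acc) ∅

/-- The path on `n` vertices `0, 1, …, n-1`, two-colored alternately; the black
vertices are those whose index has parity `r`. -/
def pathGraph (n r : ℕ) : BipGraph (Fin n) where
  B := Finset.univ.filter fun i => (i : ℕ) % 2 = r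
  W := Finset.univ.filter fun i => (i : ℕ) % 2 ≠ r
  disj := by
    rw [Finset.disjoint_left]
    intro i hi hj
    simp only [Finset.mem_filter, Finset.mem_univ, true_and] at hi hj
    exact hj hi
  E := {e | (e.1 : ℕ) % 2 = r ∧ ((e.1 : ℕ) + 1 = (e.2 : ℕ) ∨ (e.2 : ℕ) + 1 = (e.1 : ℕ))}
  E_sub := fun e he => by
    obtain ⟨h1, h2⟩ := he
    refine ⟨?_, ?_⟩ <;> simp only [Finset.mem_filter, Finset.mem_univ, true_and]
    · exact h1
    · omega

/-- The cycle on `n` vertices `0, 1, …, n-1` (consecutive vertices modulo `n` adjacent),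
two-colored alternately; the black vertices are those whose index has parity `r`. -/
def cycleGraph (n r : ℕ) : BipGraph (Fin n) where
  B := Finset.univ.filter fun i => (i : ℕ) % 2 = r
  W := Finset.univ.filter fun i => (i : ℕ) % 2 ≠ r
  disj := by
    rw [Finset.disjoint_left]
    intro i hi hj
    simp only [Finset.mem_filter, Finset.mem_univ, true_and] at hi hj
    exact hj hi
  E := {e | (e.1 : ℕ) % 2 = r ∧ (e.2 : ℕ) % 2 ≠ r ∧
       (((e.1 : ℕ) + 1) % n = (e.2 : ℕ) ∨ ((e.2 : ℕ) + 1) % n = (e.1 : ℕ))}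
  E_sub := fun e he => by
    obtain ⟨h1, h2, _⟩ := he
    refine ⟨?_, ?_⟩ <;> simp only [Finset.mem_filter, Finset.mem_univ, true_and]
    · exact h1
    · exact h2

/-- The bipartite complement of `G`. -/
def bipCompl (G : BipGraph V) : BipGraph V where
  B := G.B
  W := G.W
  disj := G.disj
  E := {e | e.1 ∈ G.B ∧ e.2 ∈ G.W ∧ e ∉ G.E}
  E_sub := fun _ he => ⟨he.1, he.2.1⟩

/-- `x` and `y` are adjacent in `G`. -/
def Adjv (G : BipGraph V) (x y : V) : Prop := (x, y) ∈ G.E ∨ (y, x) ∈ G.E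

/-- `G` is twin-free: no two distinct vertices have the same set of neighbors. -/
def TwinFree (G : BipGraph V) : Prop :=
  ∀ x ∈ G.B ∪ G.W, ∀ y ∈ G.B ∪ G.W,
    ({z | Adjv G x z} = {z | Adjv G y z}) → x = y

/-- The edges of the skew star `Star_{1,2,3}`: a path `0-1-2-3-4-5` plus a vertex `6`
adjacent only to `2`. -/
def starEdges : List (ℕ × ℕ) := [(0, 1), (1, 2), (2, 3), (3, 4), (4, 5), (2, 6)]

/-- `G` contains no induced `Star_{1,2,3}`. -/
def Star123Free (G : BipGraph V) : Prop :=
  ¬ ∃ v : Fin 7 → V, Function.Injective v ∧ (∀ i, v i ∈ G.B ∪ G.W) ∧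
    ∀ i j : Fin 7, Adjv G (v i) (v j) ↔
      (((i : ℕ), (j : ℕ)) ∈ starEdges ∨ ((j : ℕ), (i : ℕ)) ∈ starEdges)

/-- Every vertex of `G` has degree at most 2 (equivalent to `K_{1,3}`-freeness for
bipartite graphs). -/
def MaxDeg2 (G : BipGraph V) : Prop :=
  ∀ x ∈ G.B ∪ G.W, ({y | Adjv G x y}).ncard ≤ 2

/-! If a biclique of size `(b, w)` meets `M` in `(S ∩ M, T ∩ M)`, full adjacency lets any
biclique `(S', T')` of `G[M]` replace that part: `(S' ∪ S \ M, T' ∪ T \ M)` is again a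
biclique of `G`. So a bisize of `G[M]` dominating `(|S ∩ M|, |T ∩ M|)` would give a bisize of
`G` dominating `(b, w)`, which maximality forbids. -/

namespace IsBiclique

variable {G : BipGraph V} {S T S' T' M : Finset V}

theorem mono (h : IsBiclique G S T) (hS : S' ⊆ S) (hT : T' ⊆ T) : IsBiclique G S' T' :=
  ⟨hS.trans h.1, hT.trans h.2.1, fun b hb w hw => h.2.2 b (hS hb) w (hT hw)⟩

theorem union (h : IsBiclique G S T) (h' : IsBiclique G S' T')
    (hST' : ∀ b ∈ S, ∀ w ∈ T', (b, w) ∈ G.E) (hS'T : ∀ b ∈ S', ∀ w ∈ T, (b, w) ∈ G.E) :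
    IsBiclique G (S ∪ S') (T ∪ T') := by
  refine ⟨union_subset h.1 h'.1, union_subset h.2.1 h'.2.1, ?_⟩
  intro b hb w hw
  rcases mem_union.mp hb with hb | hb <;> rcases mem_union.mp hw with hw | hw
  exacts [h.2.2 b hb w hw, hST' b hb w hw, hS'T b hb w hw, h'.2.2 b hb w hw]

theorem induce_inter (h : IsBiclique G S T) (M : Finset V) :
    IsBiclique (induce G M) (S ∩ M) (T ∩ M) :=
  ⟨inter_subset_inter_right h.1, inter_subset_inter_right h.2.1,
    fun b hb w hw => ⟨h.2.2 b (mem_of_mem_inter_left hb) w (mem_of_mem_inter_left hw),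
      mem_of_mem_inter_right hb, mem_of_mem_inter_right hw⟩⟩

theorem of_induce (h : IsBiclique (induce G M) S T) : IsBiclique G S T :=
  ⟨h.1.trans inter_subset_left, h.2.1.trans inter_subset_left,
    fun b hb w hw => (h.2.2 b hb w hw).1⟩

theorem left_subset_of_induce (h : IsBiclique (induce G M) S T) : S ⊆ M :=
  h.1.trans inter_subset_right

theorem right_subset_of_induce (h : IsBiclique (induce G M) S T) : T ⊆ M :=
  h.2.1.trans inter_subset_right

theorem black_inter_union (h : IsBiclique G S T) (M : Finset V) :
    G.B ∩ M ∩ (S ∪ T) = S ∩ M := by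
  ext x
  have hT : x ∈ T → x ∉ G.B := fun hx => disjoint_right.mp G.disj (h.2.1 hx)
  simp only [mem_inter, mem_union]
  constructor
  · rintro ⟨⟨hB, hM⟩, hS | hT'⟩
    exacts [⟨hS, hM⟩, absurd hB (hT hT')]
  · exact fun ⟨hS, hM⟩ => ⟨⟨h.1 hS, hM⟩, Or.inl hS⟩

theorem white_inter_union (h : IsBiclique G S T) (M : Finset V) :
    G.W ∩ M ∩ (S ∪ T) = T ∩ M := by
  ext x
  have hS : x ∈ S → x ∉ G.W := fun hx => disjoint_left.mp G.disj (h.1 hx)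
  simp only [mem_inter, mem_union]
  constructor
  · rintro ⟨⟨hW, hM⟩, hS' | hT⟩
    exacts [absurd hW (hS hS'), ⟨hT, hM⟩]
  · exact fun ⟨hT, hM⟩ => ⟨⟨h.2.1 hT, hM⟩, Or.inr hT⟩

theorem union_sdiff_of_fullyAdj (h : IsBiclique G S T) (hadj : FullyAdj G M ((S ∪ T) \ M))
    (h' : IsBiclique (induce G M) S' T') : IsBiclique G (S' ∪ S \ M) (T' ∪ T \ M) := by
  refine h'.of_induce.union (h.mono sdiff_subset sdiff_subset) ?_ ?_
  · intro b hb w hw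
    obtain ⟨hwT, hwM⟩ := mem_sdiff.mp hw
    exact hadj.1 b (mem_inter.mpr ⟨h'.left_subset_of_induce hb, h'.of_induce.1 hb⟩) w
      (mem_inter.mpr ⟨mem_sdiff.mpr ⟨mem_union_right S hwT, hwM⟩, h.2.1 hwT⟩)
  · intro b hb w hw
    obtain ⟨hbS, hbM⟩ := mem_sdiff.mp hb
    exact hadj.2 b (mem_inter.mpr ⟨mem_sdiff.mpr ⟨mem_union_left T hbS, hbM⟩, h.1 hbS⟩) w
      (mem_inter.mpr ⟨h'.right_subset_of_induce hw, h'.of_induce.2.1 hw⟩)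

end IsBiclique

theorem maxBisize_induce_of_exchange {G : BipGraph V} {S T M : Finset V}
    (hmax : MaxBisize G (S.card, T.card)) (h : IsBiclique G S T)
    (hexch : ∀ S' T', IsBiclique (induce G M) S' T' → IsBiclique G (S' ∪ S \ M) (T' ∪ T \ M)) :
    MaxBisize (induce G M) ((S ∩ M).card, (T ∩ M).card) := by
  refine ⟨⟨_, _, h.induce_inter M, rfl, rfl⟩, ?_⟩
  rintro ⟨p, q⟩ ⟨S', T', h', rfl, rfl⟩ ⟨hp, hq⟩
  have hcardS : (S' ∪ S \ M).card = S'.card + (S \ M).card :=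
    card_union_of_disjoint (disjoint_sdiff_self_right.mono_left h'.left_subset_of_induce)
  have hcardT : (T' ∪ T \ M).card = T'.card + (T \ M).card :=
    card_union_of_disjoint (disjoint_sdiff_self_right.mono_left h'.right_subset_of_induce)
  have hsplitS := card_inter_add_card_sdiff S M
  have hsplitT := card_inter_add_card_sdiff T M
  have heq := hmax.2 ((S' ∪ S \ M).card, (T' ∪ T \ M).card) ⟨_, _, hexch S' T' h', rfl, rfl⟩
    ⟨by dsimp only at hp ⊢; omega, by dsimp only at hq ⊢; omega⟩
  simp only [Prod.mk.injEq] at heq ⊢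
  omega

theorem maxbisize_of_fully_adjacent_bimodule_general {V : Type} [DecidableEq V] (G : BipGraph V)
    (b w : ℕ) (S T C M : Finset V)
    (hmax : MaxBisize G (b, w))
    (hbc : IsBiclique G S T) (hSb : S.card = b) (hTw : T.card = w)
    (hC : C = S ∪ T)
    (hadj : FullyAdj G M (C \ M)) :
    ((G.B ∩ M ∩ C).card, (G.W ∩ M ∩ C).card) ∈ DD (induce G M) := by
  subst hC hSb hTw
  rw [hbc.black_inter_union, hbc.white_inter_union]
  exact maxBisize_induce_of_exchange hmax hbc fun _ _ => hbc.union_sdiff_of_fullyAdj hadj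

/-- Proposition 4 of the paper. -/
theorem maxbisize_of_fully_adjacent_bimodule {V : Type} [DecidableEq V] (G : BipGraph V)
    (b w : ℕ) (S T C M : Finset V)
    (hmax : MaxBisize G (b, w))
    (hbc : IsBiclique G S T) (hSb : S.card = b) (hTw : T.card = w)
    (hC : C = S ∪ T)
    (hM : M ⊆ G.B ∪ G.W)
    (hadj : FullyAdj G M (C \ M)) :
    ((G.B ∩ M ∩ C).card, (G.W ∩ M ∩ C).card) ∈ DD (induce G M) :=
  maxbisize_of_fully_adjacent_bimodule_general G b w S T C M hmax hbc hSb hTw hC hadj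
end

section
/- Let G be a finite bipartite graph and suppose B ∪ W = X ⊎ Y where X and Y are nonempty and nonadjacent. Then D(G) = Dom( D(X) ∪ D(Y) ∪ {(0, |W|), (|B|, 0)} ). -/
open Finset

variable {V : Type} [DecidableEq V]

/-!
A biclique with both sides nonempty is connected, so, `X` and `Y` being nonadjacent, it lies
inside `X` or inside `Y`. Hence every bisize of `G` is dominated by a maxbisize of `G[X]` or of
`G[Y]`, or, when one side is empty, by `(0, |W|)` or `(|B|, 0)`. All these candidates are bisizes
of `G`, so they form a cofinal subset of the bisizes, and a cofinal subset has the same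
undominated elements.
-/

lemma Dominates.of_le {p q : ℕ × ℕ} (h : q ≤ p) : Dominates p q := Prod.mk_le_mk.mp h

lemma Dominates.le {p q : ℕ × ℕ} (h : Dominates p q) : q ≤ p := Prod.mk_le_mk.mpr h

lemma Dominates.trans {p q r : ℕ × ℕ} (hpq : Dominates p q) (hqr : Dominates q r) :
    Dominates p r :=
  ⟨hqr.1.trans hpq.1, hqr.2.trans hpq.2⟩

lemma Dominates.antisymm {p q : ℕ × ℕ} (hpq : Dominates p q) (hqp : Dominates q p) : p = q :=
  Prod.ext (le_antisymm hqp.1 hpq.1) (le_antisymm hqp.2 hpq.2)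

lemma Dom_eq_of_cofinal {S A : Set (ℕ × ℕ)} (hAS : A ⊆ S)
    (hcof : ∀ p ∈ S, ∃ a ∈ A, Dominates a p) : Dom S = Dom A := by
  ext p
  constructor
  · rintro ⟨hpS, hmax⟩
    obtain ⟨a, haA, hap⟩ := hcof p hpS
    obtain rfl : a = p := hmax a (hAS haA) hap
    exact ⟨haA, fun q hqA => hmax q (hAS hqA)⟩
  · rintro ⟨hpA, hmax⟩
    refine ⟨hAS hpA, fun q hqS hqp => ?_⟩
    obtain ⟨a, haA, haq⟩ := hcof q hqS
    obtain rfl : a = p := hmax a haA (haq.trans hqp)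
    exact hqp.antisymm haq

lemma DD_eq_Dom (G : BipGraph V) : DD G = Dom {p | Bisize G p} := rfl

lemma Nonadj.symm {G : BipGraph V} {X Y : Finset V} (h : Nonadj G X Y) : Nonadj G Y X :=
  fun y hy x hx => (h x hx y hy).symm

lemma Bisize.le_card {G : BipGraph V} {p : ℕ × ℕ} (h : Bisize G p) :
    p.1 ≤ G.B.card ∧ p.2 ≤ G.W.card := by
  obtain ⟨S, T, ⟨hSB, hTW, _⟩, hS, hT⟩ := h
  exact ⟨hS ▸ card_le_card hSB, hT ▸ card_le_card hTW⟩

lemma Bisize.exists_mem_DD_dominates {G : BipGraph V} {p : ℕ × ℕ} (h : Bisize G p) :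
    ∃ q ∈ DD G, Dominates q p := by
  have hfin : {q | Bisize G q}.Finite :=
    (Set.finite_Iic (G.B.card, G.W.card)).subset fun q hq => Prod.mk_le_mk.mpr hq.le_card
  obtain ⟨q, hpq, hq, hmax⟩ := hfin.exists_le_maximal h
  exact ⟨q, ⟨hq, fun r hr hrq => hrq.antisymm (.of_le (hmax hr hrq.le))⟩,
    Dominates.of_le hpq⟩

lemma bisize_zero_card_W (G : BipGraph V) : Bisize G (0, G.W.card) :=
  ⟨∅, G.W, ⟨empty_subset _, subset_rfl, by simp⟩, card_empty, rfl⟩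

lemma bisize_card_B_zero (G : BipGraph V) : Bisize G (G.B.card, 0) :=
  ⟨G.B, ∅, ⟨subset_rfl, empty_subset _, by simp⟩, rfl, card_empty⟩

lemma IsBiclique.induce_of_subset {G : BipGraph V} {M S T : Finset V} (h : IsBiclique G S T)
    (hSM : S ⊆ M) (hTM : T ⊆ M) : IsBiclique (induce G M) S T :=
  ⟨subset_inter h.1 hSM, subset_inter h.2.1 hTM,
    fun b hb w hw => ⟨h.2.2 b hb w hw, hSM hb, hTM hw⟩⟩

lemma IsBiclique.of_induce_s7 {G : BipGraph V} {M S T : Finset V}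
    (h : IsBiclique (induce G M) S T) : IsBiclique G S T :=
  ⟨h.1.trans inter_subset_left, h.2.1.trans inter_subset_left,
    fun b hb w hw => (h.2.2 b hb w hw).1⟩

lemma Bisize.of_induce_s7 {G : BipGraph V} {M : Finset V} {p : ℕ × ℕ}
    (h : Bisize (induce G M) p) : Bisize G p := by
  obtain ⟨S, T, hST, hS, hT⟩ := h
  exact ⟨S, T, hST.of_induce_s7, hS, hT⟩

lemma IsBiclique.subset_of_nonadj {G : BipGraph V} {X Y S T : Finset V}
    (hcover : G.B ∪ G.W ⊆ X ∪ Y) (hadj : Nonadj G X Y) (h : IsBiclique G S T)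
    {s : V} (hs : s ∈ S) (hsX : s ∈ X) (hT : T.Nonempty) : S ⊆ X ∧ T ⊆ X := by
  obtain ⟨hSB, hTW, hE⟩ := h
  have side {v : V} (hv : v ∈ G.B ∪ G.W) (hvY : v ∈ Y → False) : v ∈ X := by
    rcases mem_union.mp (hcover hv) with hvX | hvY'
    · exact hvX
    · exact (hvY hvY').elim
  have hTX : T ⊆ X := fun w hw =>
    side (mem_union_right _ (hTW hw)) fun hwY => (hadj s hsX w hwY).1 (hE s hs w hw)
  obtain ⟨t, ht⟩ := hT
  exact ⟨fun b hb => side (mem_union_left _ (hSB hb))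
    fun hbY => (hadj t (hTX ht) b hbY).2 (hE b hb t ht), hTX⟩

lemma bisize_induce_of_nonadj {G : BipGraph V} {X Y : Finset V}
    (hcover : G.B ∪ G.W ⊆ X ∪ Y) (hadj : Nonadj G X Y) {p : ℕ × ℕ} (hp : Bisize G p)
    (h1 : p.1 ≠ 0) (h2 : p.2 ≠ 0) : Bisize (induce G X) p ∨ Bisize (induce G Y) p := by
  obtain ⟨S, T, hST, hS, hT⟩ := hp
  obtain ⟨s, hs⟩ := card_ne_zero.mp (hS ▸ h1)
  have hT' : T.Nonempty := card_ne_zero.mp (hT ▸ h2)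
  rcases mem_union.mp (hcover (mem_union_left _ (hST.1 hs))) with hsX | hsY
  · obtain ⟨hSX, hTX⟩ := hST.subset_of_nonadj hcover hadj hs hsX hT'
    exact .inl ⟨S, T, hST.induce_of_subset hSX hTX, hS, hT⟩
  · obtain ⟨hSY, hTY⟩ :=
      hST.subset_of_nonadj (union_comm X Y ▸ hcover) hadj.symm hs hsY hT'
    exact .inr ⟨S, T, hST.induce_of_subset hSY hTY, hS, hT⟩

theorem parallel_case_general {V : Type} [DecidableEq V] (G : BipGraph V) (X Y : Finset V)
    (hcover : X ∪ Y = G.B ∪ G.W)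
    (hadj : Nonadj G X Y) :
    DD G = Dom (DD (induce G X) ∪ DD (induce G Y) ∪ {(0, G.W.card), (G.B.card, 0)}) := by
  rw [DD_eq_Dom]
  apply Dom_eq_of_cofinal
  · rintro p ((hp | hp) | rfl | rfl)
    exacts [hp.1.of_induce_s7, hp.1.of_induce_s7, bisize_zero_card_W G, bisize_card_B_zero G]
  · intro p hp
    obtain ⟨hB, hW⟩ := hp.le_card
    by_cases h1 : p.1 = 0
    · exact ⟨_, .inr (.inl rfl), ⟨h1 ▸ le_rfl, hW⟩⟩
    by_cases h2 : p.2 = 0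
    · exact ⟨_, .inr (.inr rfl), ⟨hB, h2 ▸ le_rfl⟩⟩
    rcases bisize_induce_of_nonadj hcover.ge hadj hp h1 h2 with hX | hY
    · obtain ⟨q, hq, hqp⟩ := hX.exists_mem_DD_dominates
      exact ⟨q, .inl (.inl hq), hqp⟩
    · obtain ⟨q, hq, hqp⟩ := hY.exists_mem_DD_dominates
      exact ⟨q, .inl (.inr hq), hqp⟩

/-- Parallel case, Theorem 8 of the paper. -/
theorem parallel_case {V : Type} [DecidableEq V] (G : BipGraph V) (X Y : Finset V)
    (hX : X.Nonempty) (hY : Y.Nonempty) (hdisj : Disjoint X Y)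
    (hcover : X ∪ Y = G.B ∪ G.W)
    (hadj : Nonadj G X Y) :
    DD G = Dom (DD (induce G X) ∪ DD (induce G Y) ∪ {(0, G.W.card), (G.B.card, 0)}) :=
  parallel_case_general G X Y hcover hadj
end

section
/- Let G be a finite bipartite graph and suppose B ∪ W = X ⊎ Y where X and Y are nonempty and X is left adjacent to Y. Then D(G) = Dom( (→_w^{|W ∩ Y|} D(X)) ∪ (→_b^{|B ∩ X|} D(Y)) ). -/
open Finset

variable {V : Type} [DecidableEq V]

lemma bisize_bound (G : BipGraph V) {p : ℕ × ℕ} (hp : Bisize G p) :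
    p.1 ≤ G.B.card ∧ p.2 ≤ G.W.card := by
  obtain ⟨S, T, ⟨hS, hT, _⟩, h1, h2⟩ := hp
  exact ⟨h1 ▸ card_le_card hS, h2 ▸ card_le_card hT⟩

lemma bisize_mono (G : BipGraph V) {p q : ℕ × ℕ} (hp : Bisize G p)
    (h : Dominates p q) : Bisize G q := by
  obtain ⟨S, T, ⟨hS, hT, hE⟩, h1, h2⟩ := hp
  obtain ⟨S', hS'sub, hS'card⟩ := Finset.exists_subset_card_eq (s := S) (n := q.1) (h1 ▸ h.1)
  obtain ⟨T', hT'sub, hT'card⟩ := Finset.exists_subset_card_eq (s := T) (n := q.2) (h2 ▸ h.2)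
  exact ⟨S', T', ⟨hS'sub.trans hS, hT'sub.trans hT,
    fun b hb w hw => hE b (hS'sub hb) w (hT'sub hw)⟩, hS'card, hT'card⟩

lemma exists_max_bisize (G : BipGraph V) {p : ℕ × ℕ} (hp : Bisize G p) :
    ∃ m, MaxBisize G m ∧ Dominates m p := by
  classical
  set P : ℕ → Prop := fun n => ∃ q, Bisize G q ∧ Dominates q p ∧ q.1 + q.2 = n with hP
  have hPp : P (p.1 + p.2) := ⟨p, hp, ⟨le_rfl, le_rfl⟩, rfl⟩
  have hbd : ∀ n, P n → n ≤ G.B.card + G.W.card := by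
    rintro n ⟨q, hq, _, rfl⟩
    have := bisize_bound G hq; omega
  obtain ⟨q, hq, hqd, hqsum⟩ := Nat.findGreatest_spec (hbd _ hPp) hPp
  refine ⟨q, ⟨hq, ?_⟩, hqd⟩
  intro r hr hdr
  have hrd : Dominates r p := ⟨hqd.1.trans hdr.1, hqd.2.trans hdr.2⟩
  have hle : r.1 + r.2 ≤ Nat.findGreatest P (G.B.card + G.W.card) :=
    Nat.le_findGreatest (hbd _ ⟨r, hr, hrd, rfl⟩) ⟨r, hr, hrd, rfl⟩
  obtain ⟨r1, r2⟩ := r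
  obtain ⟨q1, q2⟩ := q
  obtain ⟨hd1, hd2⟩ := hdr
  simp only [Prod.mk.injEq]
  simp only at hd1 hd2 hqsum hle
  omega

/-- K+S case, Theorem 10 of the paper. -/
theorem ks_case {V : Type} [DecidableEq V] (G : BipGraph V) (X Y : Finset V)
    (hX : X.Nonempty) (hY : Y.Nonempty) (hdisj : Disjoint X Y)
    (hcover : X ∪ Y = G.B ∪ G.W)
    (hadj : LeftAdj G X Y) :
    DD G = Dom (shiftW (G.W ∩ Y).card (DD (induce G X)) ∪
                shiftB (G.B ∩ X).card (DD (induce G Y))) := by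
  classical
  set Sset : Set (ℕ × ℕ) := shiftW (G.W ∩ Y).card (DD (induce G X)) ∪
      shiftB (G.B ∩ X).card (DD (induce G Y)) with hSset
  have claim1 : ∀ s ∈ Sset, Bisize G s := by
    rintro s (⟨q, hq, rfl⟩ | ⟨q, hq, rfl⟩)
    · obtain ⟨Sx, Tx, ⟨hSx, hTx, hEx⟩, h1, h2⟩ := hq.1
      have hdis : Disjoint Tx (G.W ∩ Y) :=
        hdisj.mono (fun v hv => (Finset.mem_inter.mp (hTx hv)).2)
          (fun v hv => (Finset.mem_inter.mp hv).2)
      refine ⟨Sx, Tx ∪ (G.W ∩ Y), ⟨?_, ?_, ?_⟩, h1, ?_⟩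
      · exact fun v hv => (Finset.mem_inter.mp (hSx hv)).1
      · exact Finset.union_subset (fun v hv => (Finset.mem_inter.mp (hTx hv)).1)
          (fun v hv => (Finset.mem_inter.mp hv).1)
      · intro b hb w hw
        rcases Finset.mem_union.mp hw with hw | hw
        · exact (hEx b hb w hw).1
        · refine hadj.1 b ?_ w ?_
          · have h := Finset.mem_inter.mp (hSx hb)
            exact Finset.mem_inter.mpr ⟨h.2, h.1⟩
          · have h := Finset.mem_inter.mp hw
            exact Finset.mem_inter.mpr ⟨h.2, h.1⟩
      · rw [Finset.card_union_of_disjoint hdis, h2]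
    · obtain ⟨Sy, Ty, ⟨hSy, hTy, hEy⟩, h1, h2⟩ := hq.1
      have hdis : Disjoint Sy (G.B ∩ X) :=
        (hdisj.symm.mono (fun v hv => (Finset.mem_inter.mp (hSy hv)).2)
          (fun v hv => (Finset.mem_inter.mp hv).2))
      refine ⟨Sy ∪ (G.B ∩ X), Ty, ⟨?_, ?_, ?_⟩, ?_, h2⟩
      · exact Finset.union_subset (fun v hv => (Finset.mem_inter.mp (hSy hv)).1)
          (fun v hv => (Finset.mem_inter.mp hv).1)
      · exact fun v hv => (Finset.mem_inter.mp (hTy hv)).1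
      · intro b hb w hw
        rcases Finset.mem_union.mp hb with hb | hb
        · exact (hEy b hb w hw).1
        · refine hadj.1 b ?_ w ?_
          · have h := Finset.mem_inter.mp hb
            exact Finset.mem_inter.mpr ⟨h.2, h.1⟩
          · have h := Finset.mem_inter.mp (hTy hw)
            exact Finset.mem_inter.mpr ⟨h.2, h.1⟩
      · rw [Finset.card_union_of_disjoint hdis, h1]
  have claim2 : ∀ p, Bisize G p → ∃ s ∈ Sset, Dominates s p := by
    rintro p ⟨S, T, ⟨hS, hT, hE⟩, h1, h2⟩
    have hTXY : T ⊆ X ∪ Y := by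
      intro v hv; rw [hcover]; exact Finset.mem_union_right _ (hT hv)
    have hSXY : S ⊆ X ∪ Y := by
      intro v hv; rw [hcover]; exact Finset.mem_union_left _ (hS hv)
    have hsplitT : T.card = (T ∩ X).card + (T ∩ Y).card := by
      rw [← Finset.card_union_of_disjoint
        (hdisj.mono Finset.inter_subset_right Finset.inter_subset_right),
        ← Finset.inter_union_distrib_left, Finset.inter_eq_left.mpr hTXY]
    have hsplitS : S.card = (S ∩ X).card + (S ∩ Y).card := by
      rw [← Finset.card_union_of_disjoint
        (hdisj.mono Finset.inter_subset_right Finset.inter_subset_right),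
        ← Finset.inter_union_distrib_left, Finset.inter_eq_left.mpr hSXY]
    by_cases hTX : T ∩ X = ∅
    · -- Y side
      have hTY : T ⊆ Y := by
        intro v hv
        rcases Finset.mem_union.mp (hTXY hv) with h | h
        · exact absurd (Finset.mem_inter.mpr ⟨hv, h⟩) (by rw [hTX]; exact Finset.notMem_empty v)
        · exact h
      have hbis : Bisize (induce G Y) ((S ∩ Y).card, T.card) := by
        refine ⟨S ∩ Y, T, ⟨?_, ?_, ?_⟩, rfl, rfl⟩
        · intro v hv
          have h := Finset.mem_inter.mp hv
          exact Finset.mem_inter.mpr ⟨hS h.1, h.2⟩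
        · exact fun v hv => Finset.mem_inter.mpr ⟨hT hv, hTY hv⟩
        · intro b hb w hw
          exact ⟨hE b (Finset.mem_inter.mp hb).1 w hw, (Finset.mem_inter.mp hb).2, hTY hw⟩
      obtain ⟨m, hm, hmd⟩ := exists_max_bisize _ hbis
      have hm1 : (S ∩ Y).card ≤ m.1 := hmd.1
      have hm2 : T.card ≤ m.2 := hmd.2
      refine ⟨(m.1 + (G.B ∩ X).card, m.2), Set.mem_union_right _ ⟨m, hm, rfl⟩, ?_, ?_⟩
      · show p.1 ≤ m.1 + (G.B ∩ X).card
        have hcard : (S ∩ X).card ≤ (G.B ∩ X).card := Finset.card_le_card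
          (fun v hv => Finset.mem_inter.mpr
            ⟨hS (Finset.mem_inter.mp hv).1, (Finset.mem_inter.mp hv).2⟩)
        omega
      · show p.2 ≤ m.2
        omega
    · -- X side
      have hSY : S ∩ Y = ∅ := by
        by_contra hne
        obtain ⟨b, hb⟩ := Finset.nonempty_iff_ne_empty.mpr hne
        obtain ⟨w, hw⟩ := Finset.nonempty_iff_ne_empty.mpr hTX
        have hb' := Finset.mem_inter.mp hb
        have hw' := Finset.mem_inter.mp hw
        exact hadj.2 b (Finset.mem_inter.mpr ⟨hb'.2, hS hb'.1⟩) w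
          (Finset.mem_inter.mpr ⟨hw'.2, hT hw'.1⟩) (hE b hb'.1 w hw'.1)
      have hSX : S ⊆ X := by
        intro v hv
        rcases Finset.mem_union.mp (hSXY hv) with h | h
        · exact h
        · exact absurd (Finset.mem_inter.mpr ⟨hv, h⟩) (by rw [hSY]; exact Finset.notMem_empty v)
      have hbis : Bisize (induce G X) (S.card, (T ∩ X).card) := by
        refine ⟨S, T ∩ X, ⟨?_, ?_, ?_⟩, rfl, rfl⟩
        · exact fun v hv => Finset.mem_inter.mpr ⟨hS hv, hSX hv⟩
        · intro v hv
          have h := Finset.mem_inter.mp hv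
          exact Finset.mem_inter.mpr ⟨hT h.1, h.2⟩
        · intro b hb w hw
          exact ⟨hE b hb w (Finset.mem_inter.mp hw).1, hSX hb, (Finset.mem_inter.mp hw).2⟩
      obtain ⟨m, hm, hmd⟩ := exists_max_bisize _ hbis
      have hm1 : S.card ≤ m.1 := hmd.1
      have hm2 : (T ∩ X).card ≤ m.2 := hmd.2
      refine ⟨(m.1, m.2 + (G.W ∩ Y).card), Set.mem_union_left _ ⟨m, hm, rfl⟩, ?_, ?_⟩
      · show p.1 ≤ m.1
        omega
      · show p.2 ≤ m.2 + (G.W ∩ Y).card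
        have hcard : (T ∩ Y).card ≤ (G.W ∩ Y).card := Finset.card_le_card
          (fun v hv => Finset.mem_inter.mpr
            ⟨hT (Finset.mem_inter.mp hv).1, (Finset.mem_inter.mp hv).2⟩)
        omega
  ext p
  constructor
  · rintro ⟨hpb, hpmax⟩
    obtain ⟨s, hsS, hsd⟩ := claim2 p hpb
    have hs := hpmax s (claim1 s hsS) hsd
    subst hs
    exact ⟨hsS, fun q hqS hqd => hpmax q (claim1 q hqS) hqd⟩
  · rintro ⟨hpS, hpmax⟩
    refine ⟨claim1 p hpS, ?_⟩
    intro q hq hqd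
    obtain ⟨s, hsS, hsd⟩ := claim2 q hq
    have hsp : Dominates s p := ⟨hqd.1.trans hsd.1, hqd.2.trans hsd.2⟩
    have hsep := hpmax s hsS hsp
    subst hsep
    have e1 := le_antisymm hsd.1 hqd.1
    have e2 := le_antisymm hsd.2 hqd.2
    exact Prod.ext e1 e2
end

section
/- Let G be a finite bipartite graph whose vertex set is partitioned into nonempty sets V_1, …, V_k (k ≥ 2) such that V_i is left adjacent to V_j for all i < j. Then for every i with 0 ≤ i ≤ k: the set (B ∩ (V_1 ∪ … ∪ V_i)) ∪ (W ∩ (V_{i+1} ∪ … ∪ V_k)) is the vertex set of a biclique of G, and the set (W ∩ (V_1 ∪ … ∪ V_i)) ∪ (B ∩ (V_{i+1} ∪ … ∪ V_k)) is an independent set of G (no two of its vertices are adjacent). -/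
open Finset

variable {V : Type} [DecidableEq V]

/-! Cutting the ordered partition after its `i`-th part gives a prefix that is left adjacent to
the suffix, since left adjacency of parts passes to unions of parts. A left adjacent pair
`(X, Y)` makes the black vertices of `X` and the white vertices of `Y` a biclique, while the
only possible edges inside `(W ∩ X) ∪ (B ∩ Y)` would join a black vertex of `Y` to a white
vertex of `X`, which left adjacency forbids. -/

namespace LeftAdj

variable {G : BipGraph V} {X Y : Finset V}

lemma biUnion {ι : Type*} {P : ι → Finset V} {s t : Finset ι}
    (h : ∀ a ∈ s, ∀ b ∈ t, LeftAdj G (P a) (P b)) :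
    LeftAdj G (s.biUnion P) (t.biUnion P) := by
  constructor
  · intro x hx y hy
    obtain ⟨hxP, hxB⟩ := mem_inter.mp hx
    obtain ⟨hyP, hyW⟩ := mem_inter.mp hy
    obtain ⟨a, ha, hxa⟩ := mem_biUnion.mp hxP
    obtain ⟨b, hb, hyb⟩ := mem_biUnion.mp hyP
    exact (h a ha b hb).1 x (mem_inter.mpr ⟨hxa, hxB⟩) y (mem_inter.mpr ⟨hyb, hyW⟩)
  · intro x hx y hy
    obtain ⟨hxP, hxB⟩ := mem_inter.mp hx
    obtain ⟨hyP, hyW⟩ := mem_inter.mp hy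
    obtain ⟨b, hb, hxb⟩ := mem_biUnion.mp hxP
    obtain ⟨a, ha, hya⟩ := mem_biUnion.mp hyP
    exact (h a ha b hb).2 x (mem_inter.mpr ⟨hxb, hxB⟩) y (mem_inter.mpr ⟨hya, hyW⟩)

lemma isBiclique (h : LeftAdj G X Y) : IsBiclique G (G.B ∩ X) (G.W ∩ Y) :=
  ⟨inter_subset_left, inter_subset_left, fun b hb w hw =>
    h.1 b (mem_inter.mpr ⟨(mem_inter.mp hb).2, (mem_inter.mp hb).1⟩)
      w (mem_inter.mpr ⟨(mem_inter.mp hw).2, (mem_inter.mp hw).1⟩)⟩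

lemma not_mem_E (h : LeftAdj G X Y) :
    ∀ x ∈ (G.W ∩ X) ∪ (G.B ∩ Y), ∀ y ∈ (G.W ∩ X) ∪ (G.B ∩ Y), (x, y) ∉ G.E := by
  intro x hx y hy hxy
  obtain ⟨hxB, hyW⟩ := G.E_sub _ hxy
  have hxY : x ∈ Y := by
    rcases mem_union.mp hx with hx | hx
    · exact absurd (mem_inter.mp hx).1 (disjoint_left.mp G.disj hxB)
    · exact (mem_inter.mp hx).2
  have hyX : y ∈ X := by
    rcases mem_union.mp hy with hy | hy
    · exact (mem_inter.mp hy).2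
    · exact absurd hyW (disjoint_left.mp G.disj (mem_inter.mp hy).1)
  exact h.2 x (mem_inter.mpr ⟨hxY, hxB⟩) y (mem_inter.mpr ⟨hyX, hyW⟩) hxy

end LeftAdj

theorem ks_biclique_and_stable_general {V : Type} [DecidableEq V] (G : BipGraph V)
    (k : ℕ) (P : Fin k → Finset V)
    (hadj : ∀ i j : Fin k, i < j → LeftAdj G (P i) (P j))
    (i : ℕ) :
    IsBiclique G
        (G.B ∩ (Finset.univ.filter fun j : Fin k => (j : ℕ) < i).biUnion P)
        (G.W ∩ (Finset.univ.filter fun j : Fin k => i ≤ (j : ℕ)).biUnion P) ∧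
    ∀ x ∈ (G.W ∩ (Finset.univ.filter fun j : Fin k => (j : ℕ) < i).biUnion P) ∪
          (G.B ∩ (Finset.univ.filter fun j : Fin k => i ≤ (j : ℕ)).biUnion P),
      ∀ y ∈ (G.W ∩ (Finset.univ.filter fun j : Fin k => (j : ℕ) < i).biUnion P) ∪
            (G.B ∩ (Finset.univ.filter fun j : Fin k => i ≤ (j : ℕ)).biUnion P),
        (x, y) ∉ G.E := by
  have hcut : LeftAdj G ((univ.filter fun j : Fin k => (j : ℕ) < i).biUnion P)
      ((univ.filter fun j : Fin k => i ≤ (j : ℕ)).biUnion P) :=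
    LeftAdj.biUnion fun a ha b hb => hadj a b <| by
      rw [mem_filter] at ha hb
      exact Fin.lt_def.mpr (lt_of_lt_of_le ha.2 hb.2)
  exact ⟨hcut.isBiclique, hcut.not_mem_E⟩

/-- structure of K+S decompositions. -/
theorem ks_biclique_and_stable {V : Type} [DecidableEq V] (G : BipGraph V)
    (k : ℕ) (hk : 2 ≤ k) (P : Fin k → Finset V)
    (hne : ∀ i, (P i).Nonempty)
    (hdisj : ∀ i j, i ≠ j → Disjoint (P i) (P j))
    (hcover : Finset.univ.biUnion P = G.B ∪ G.W)
    (hadj : ∀ i j : Fin k, i < j → LeftAdj G (P i) (P j))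
    (i : ℕ) (hi : i ≤ k) :
    IsBiclique G
        (G.B ∩ (Finset.univ.filter fun j : Fin k => (j : ℕ) < i).biUnion P)
        (G.W ∩ (Finset.univ.filter fun j : Fin k => i ≤ (j : ℕ)).biUnion P) ∧
    ∀ x ∈ (G.W ∩ (Finset.univ.filter fun j : Fin k => (j : ℕ) < i).biUnion P) ∪
          (G.B ∩ (Finset.univ.filter fun j : Fin k => i ≤ (j : ℕ)).biUnion P),
      ∀ y ∈ (G.W ∩ (Finset.univ.filter fun j : Fin k => (j : ℕ) < i).biUnion P) ∪
            (G.B ∩ (Finset.univ.filter fun j : Fin k => i ≤ (j : ℕ)).biUnion P),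
        (x, y) ∉ G.E :=
  ks_biclique_and_stable_general G k P hadj i
end

section
/- Let G be a finite bipartite graph and let M_1, …, M_k be a partition of B ∪ W into bimodules of G, with quotient graph H. If C is the vertex set of a biclique of G, then Corr(C) is the vertex set of a biclique of H, and there exists a maximal biclique C' of H such that C ⊆ Rroc(C'). -/
open Finset

variable {V : Type} [DecidableEq V]

theorem maximalBicliqueVS_iff_maximal {G : BipGraph V} {C : Finset V} :
    MaximalBicliqueVS G C ↔ Maximal (IsBicliqueVS G) C :=
  and_congr_right fun _ => forall₂_congr fun _ _ =>
    ⟨fun h hCD => (h hCD).ge, fun h hCD => le_antisymm hCD (h hCD)⟩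

theorem IsBicliqueVS.exists_maximalBicliqueVS_superset [Fintype V] {G : BipGraph V}
    {C : Finset V} (hC : IsBicliqueVS G C) :
    ∃ C', MaximalBicliqueVS G C' ∧ C ⊆ C' := by
  obtain ⟨C', hCC', hmax⟩ := Finite.exists_le_maximal hC
  exact ⟨C', maximalBicliqueVS_iff_maximal.mpr hmax, hCC'⟩

namespace IsBiclique

variable {G : BipGraph V} {S T : Finset V}

theorem mem_left_of_mem_B (h : IsBiclique G S T) {x : V} (hx : x ∈ S ∪ T) (hxB : x ∈ G.B) :
    x ∈ S :=
  (mem_union.mp hx).resolve_right fun hxT => disjoint_left.mp G.disj hxB (h.2.1 hxT)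

theorem mem_right_of_mem_W (h : IsBiclique G S T) {x : V} (hx : x ∈ S ∪ T) (hxW : x ∈ G.W) :
    x ∈ T :=
  (mem_union.mp hx).resolve_left fun hxS => disjoint_left.mp G.disj (h.1 hxS) hxW

theorem union_subset (h : IsBiclique G S T) : S ∪ T ⊆ G.B ∪ G.W :=
  union_subset_union h.1 h.2.1

end IsBiclique

section Quotient

variable {G : BipGraph V} {k : ℕ} {M : Fin k → Finset V}

@[simp]
theorem mem_corr_true {C : Finset V} {i : Fin k} :
    (i, true) ∈ Corr G M C ↔ (C ∩ M i ∩ G.B).Nonempty := by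
  simp [Corr]

@[simp]
theorem mem_corr_false {C : Finset V} {i : Fin k} :
    (i, false) ∈ Corr G M C ↔ (C ∩ M i ∩ G.W).Nonempty := by
  simp [Corr]

theorem rroc_mono {C D : Finset (Fin k × Bool)} (h : C ⊆ D) : Rroc G M C ⊆ Rroc G M D :=
  biUnion_subset_biUnion_of_subset_left _ h

theorem subset_rroc_corr {C : Finset V} (hC : C ⊆ G.B ∪ G.W) (hM : C ⊆ univ.biUnion M) :
    C ⊆ Rroc G M (Corr G M C) := by
  intro x hx
  obtain ⟨i, -, hxi⟩ := mem_biUnion.mp (hM hx)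
  rcases mem_union.mp (hC hx) with hxB | hxW
  · exact mem_biUnion.mpr ⟨(i, true), mem_corr_true.mpr ⟨x, by simp [*]⟩, by simp [*]⟩
  · exact mem_biUnion.mpr ⟨(i, false), mem_corr_false.mpr ⟨x, by simp [*]⟩, by simp [*]⟩

theorem IsBiclique.isBicliqueVS_corr {S T : Finset V} (h : IsBiclique G S T) :
    IsBicliqueVS (quotientGraph G M) (Corr G M (S ∪ T)) := by
  refine ⟨(Corr G M (S ∪ T)).filter (·.2 = true), (Corr G M (S ∪ T)).filter (·.2 = false),
    ⟨?_, ?_, ?_⟩, ?_⟩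
  · rintro ⟨i, b⟩ hi
    obtain ⟨hi, rfl : b = true⟩ := mem_filter.mp hi
    obtain ⟨x, hx⟩ := mem_corr_true.mp hi
    simp only [quotientGraph, mem_filter, mem_univ, true_and]
    exact ⟨x, by simp_all⟩
  · rintro ⟨i, b⟩ hi
    obtain ⟨hi, rfl : b = false⟩ := mem_filter.mp hi
    obtain ⟨x, hx⟩ := mem_corr_false.mp hi
    simp only [quotientGraph, mem_filter, mem_univ, true_and]
    exact ⟨x, by simp_all⟩
  · rintro ⟨i, b⟩ hi ⟨j, c⟩ hj
    obtain ⟨hi, rfl : b = true⟩ := mem_filter.mp hi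
    obtain ⟨hj, rfl : c = false⟩ := mem_filter.mp hj
    obtain ⟨x, hx⟩ := mem_corr_true.mp hi
    obtain ⟨y, hy⟩ := mem_corr_false.mp hj
    simp only [mem_inter] at hx hy
    have hxS := h.mem_left_of_mem_B hx.1.1 hx.2
    have hyT := h.mem_right_of_mem_W hy.1.1 hy.2
    exact ⟨rfl, rfl, x, mem_inter.mpr ⟨hx.1.2, hx.2⟩, y, mem_inter.mpr ⟨hy.1.2, hy.2⟩,
      h.2.2 x hxS y hyT⟩
  · ext ⟨i, b⟩
    cases b <;> simp

end Quotient

theorem corr_biclique_and_maximal_cover_general {V : Type} [DecidableEq V] (G : BipGraph V)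
    (k : ℕ) (M : Fin k → Finset V)
    (hcover : Finset.univ.biUnion M = G.B ∪ G.W)
    (S T : Finset V) (hbc : IsBiclique G S T) :
    IsBicliqueVS (quotientGraph G M) (Corr G M (S ∪ T)) ∧
    ∃ C', MaximalBicliqueVS (quotientGraph G M) C' ∧ S ∪ T ⊆ Rroc G M C' := by
  have hcorr := hbc.isBicliqueVS_corr (M := M)
  obtain ⟨C', hmax, hsub⟩ := hcorr.exists_maximalBicliqueVS_superset
  refine ⟨hcorr, C', hmax, ?_⟩
  calc S ∪ T ⊆ Rroc G M (Corr G M (S ∪ T)) :=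
        subset_rroc_corr hbc.union_subset (hbc.union_subset.trans hcover.ge)
    _ ⊆ Rroc G M C' := rroc_mono hsub

/-- Proposition 15 of the paper. -/
theorem corr_biclique_and_maximal_cover {V : Type} [DecidableEq V] (G : BipGraph V)
    (k : ℕ) (M : Fin k → Finset V)
    (hne : ∀ i, (M i).Nonempty)
    (hdisj : ∀ i j, i ≠ j → Disjoint (M i) (M j))
    (hcover : Finset.univ.biUnion M = G.B ∪ G.W)
    (hbim : ∀ i, Bimodule G (M i))
    (S T : Finset V) (hbc : IsBiclique G S T) :
    IsBicliqueVS (quotientGraph G M) (Corr G M (S ∪ T)) ∧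
    ∃ C', MaximalBicliqueVS (quotientGraph G M) C' ∧ S ∪ T ⊆ Rroc G M C' :=
  corr_biclique_and_maximal_cover_general G k M hcover S T hbc
end

section
/- Let G be a bipartite graph that is a path or a cycle, with the two-coloring of its vertices alternating along the path or cycle, having b > 2 black vertices and w > 2 white vertices. Then D(G) = {(1, 2), (2, 1), (b, 0), (0, w)}. -/
open Finset

variable {V : Type} [DecidableEq V]

/-- Remark 18 of the paper: maxbisizes of paths and cycles. -/
theorem maxbisize_path_cycle (n r : ℕ) (hr : r ≤ 1) (G : BipGraph (Fin n))
    (hG : G = pathGraph n r ∨ (n % 2 = 0 ∧ G = cycleGraph n r))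
    (hb : 2 < G.B.card) (hw : 2 < G.W.card) :
    DD G = {(1, 2), (2, 1), (G.B.card, 0), (0, G.W.card)} := by
    classical
  -- structural facts
  have hBdef : ∀ x : Fin n, x ∈ G.B ↔ (x:ℕ) % 2 = r := by
    rcases hG with h | ⟨_, h⟩ <;> subst h <;> intro x <;>
      simp [pathGraph, cycleGraph]
  have hWdef : ∀ x : Fin n, x ∈ G.W ↔ ¬ ((x:ℕ) % 2 = r) := by
    rcases hG with h | ⟨_, h⟩ <;> subst h <;> intro x <;>
      simp [pathGraph, cycleGraph]
  have hn : 6 ≤ n := by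
    have hc : (G.B ∪ G.W).card = G.B.card + G.W.card :=
      Finset.card_union_of_disjoint G.disj
    have h2 : (G.B ∪ G.W).card ≤ (univ : Finset (Fin n)).card :=
      card_le_card (subset_univ _)
    simp only [Finset.card_univ, Fintype.card_fin] at h2
    omega
  have hmod : ∀ a b : ℕ, a < n → b < n → (a+1) % n = b →
      a + 1 = b ∨ (a + 1 = n ∧ b = 0) := by
    intro a b ha hb h
    rcases Nat.lt_or_ge (a+1) n with h' | h'
    · left; rwa [Nat.mod_eq_of_lt h'] at h
    · have he : a + 1 = n := by omega
      rw [he, Nat.mod_self] at h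
      right; omega
  have hE1 : ∀ x y : Fin n, (x, y) ∈ G.E → (x:ℕ) % 2 = r ∧
      ((x:ℕ) + 1 = (y:ℕ) ∨ ((x:ℕ) + 1 = n ∧ (y:ℕ) = 0) ∨
       (y:ℕ) + 1 = (x:ℕ) ∨ ((y:ℕ) + 1 = n ∧ (x:ℕ) = 0)) := by
    rcases hG with h | ⟨_, h⟩ <;> subst h <;> intro x y he
    · have he' : ((x:ℕ) % 2 = r ∧ ((x:ℕ) + 1 = (y:ℕ) ∨ (y:ℕ) + 1 = (x:ℕ))) := he
      refine ⟨he'.1, ?_⟩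
      rcases he'.2 with h2 | h2 <;> omega
    · have he' : ((x:ℕ) % 2 = r ∧ ¬ ((y:ℕ) % 2 = r) ∧
          (((x:ℕ) + 1) % n = (y:ℕ) ∨ ((y:ℕ) + 1) % n = (x:ℕ))) := he
      refine ⟨he'.1, ?_⟩
      rcases he'.2.2 with h3 | h3
      · rcases hmod _ _ x.isLt y.isLt h3 with h | h <;> omega
      · rcases hmod _ _ y.isLt x.isLt h3 with h | h <;> omega
  have hE2 : ∀ x y : Fin n, (x:ℕ) % 2 = r →
      ((x:ℕ) + 1 = (y:ℕ) ∨ (y:ℕ) + 1 = (x:ℕ)) → (x, y) ∈ G.E := by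
    rcases hG with h | ⟨_, h⟩ <;> subst h <;> intro x y h1 h2
    · exact show ((x:ℕ) % 2 = r ∧ ((x:ℕ) + 1 = (y:ℕ) ∨ (y:ℕ) + 1 = (x:ℕ))) from ⟨h1, h2⟩
    · refine show ((x:ℕ) % 2 = r ∧ ¬ ((y:ℕ) % 2 = r) ∧
          (((x:ℕ) + 1) % n = (y:ℕ) ∨ ((y:ℕ) + 1) % n = (x:ℕ))) from ⟨h1, ?_, ?_⟩
      · rcases h2 with h2 | h2 <;> omega
      · rcases h2 with h2 | h2
        · exact Or.inl (by rw [h2]; exact Nat.mod_eq_of_lt y.isLt)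
        · exact Or.inr (by rw [h2]; exact Nat.mod_eq_of_lt x.isLt)
  -- degree bounds
  have degB : ∀ x y1 y2 y3 : Fin n, (x, y1) ∈ G.E → (x, y2) ∈ G.E →
      (x, y3) ∈ G.E → y1 ≠ y2 → y1 ≠ y3 → y2 ≠ y3 → False := by
    intro x y1 y2 y3 e1 e2 e3 d12 d13 d23
    have h1 := (hE1 _ _ e1).2
    have h2 := (hE1 _ _ e2).2
    have h3 := (hE1 _ _ e3).2
    have n12 : (y1:ℕ) ≠ (y2:ℕ) := fun h => d12 (Fin.val_injective h)
    have n13 : (y1:ℕ) ≠ (y3:ℕ) := fun h => d13 (Fin.val_injective h)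
    have n23 : (y2:ℕ) ≠ (y3:ℕ) := fun h => d23 (Fin.val_injective h)
    rcases h1 with h1 | h1 | h1 | h1 <;> rcases h2 with h2 | h2 | h2 | h2 <;>
      rcases h3 with h3 | h3 | h3 | h3 <;> omega
  have degW : ∀ y x1 x2 x3 : Fin n, (x1, y) ∈ G.E → (x2, y) ∈ G.E →
      (x3, y) ∈ G.E → x1 ≠ x2 → x1 ≠ x3 → x2 ≠ x3 → False := by
    intro y x1 x2 x3 e1 e2 e3 d12 d13 d23
    have h1 := (hE1 _ _ e1).2
    have h2 := (hE1 _ _ e2).2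
    have h3 := (hE1 _ _ e3).2
    have n12 : (x1:ℕ) ≠ (x2:ℕ) := fun h => d12 (Fin.val_injective h)
    have n13 : (x1:ℕ) ≠ (x3:ℕ) := fun h => d13 (Fin.val_injective h)
    have n23 : (x2:ℕ) ≠ (x3:ℕ) := fun h => d23 (Fin.val_injective h)
    rcases h1 with h1 | h1 | h1 | h1 <;> rcases h2 with h2 | h2 | h2 | h2 <;>
      rcases h3 with h3 | h3 | h3 | h3 <;> omega
  have noC4 : ∀ x1 x2 y1 y2 : Fin n, (x1, y1) ∈ G.E → (x1, y2) ∈ G.E →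
      (x2, y1) ∈ G.E → (x2, y2) ∈ G.E → x1 ≠ x2 → y1 ≠ y2 → False := by
    intro x1 x2 y1 y2 e1 e2 e3 e4 dx dy
    have h1 := (hE1 _ _ e1).2
    have h2 := (hE1 _ _ e2).2
    have h3 := (hE1 _ _ e3).2
    have h4 := (hE1 _ _ e4).2
    have nx : (x1:ℕ) ≠ (x2:ℕ) := fun h => dx (Fin.val_injective h)
    have ny : (y1:ℕ) ≠ (y2:ℕ) := fun h => dy (Fin.val_injective h)
    rcases h1 with h1 | h1 | h1 | h1 <;> rcases h2 with h2 | h2 | h2 | h2 <;>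
      rcases h3 with h3 | h3 | h3 | h3 <;> rcases h4 with h4 | h4 | h4 | h4 <;> omega
  -- biclique size bounds
  have hT2 : ∀ S T : Finset (Fin n), IsBiclique G S T → S.Nonempty → T.card ≤ 2 := by
    intro S T hST ⟨x, hx⟩
    by_contra h
    obtain ⟨T', hT'sub, hT'⟩ := Finset.exists_subset_card_eq (s := T) (n := 3) (by omega)
    obtain ⟨a, c, d, hab, hac, hbc, hTe⟩ := Finset.card_eq_three.mp hT'
    have ma : a ∈ T := hT'sub (by rw [hTe]; simp)
    have mb : c ∈ T := hT'sub (by rw [hTe]; simp)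
    have mc : d ∈ T := hT'sub (by rw [hTe]; simp)
    exact degB x a c d (hST.2.2 x hx a ma) (hST.2.2 x hx c mb)
      (hST.2.2 x hx d mc) hab hac hbc
  have hS2 : ∀ S T : Finset (Fin n), IsBiclique G S T → T.Nonempty → S.card ≤ 2 := by
    intro S T hST ⟨y, hy⟩
    by_contra h
    obtain ⟨S', hS'sub, hS'⟩ := Finset.exists_subset_card_eq (s := S) (n := 3) (by omega)
    obtain ⟨a, c, d, hab, hac, hbc, hSe⟩ := Finset.card_eq_three.mp hS'
    have ma : a ∈ S := hS'sub (by rw [hSe]; simp)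
    have mb : c ∈ S := hS'sub (by rw [hSe]; simp)
    have mc : d ∈ S := hS'sub (by rw [hSe]; simp)
    exact degW y a c d (hST.2.2 a ma y hy) (hST.2.2 c mb y hy)
      (hST.2.2 d mc y hy) hab hac hbc
  have hno22 : ∀ S T : Finset (Fin n), IsBiclique G S T →
      S.card ≤ 1 ∨ T.card ≤ 1 := by
    intro S T hST
    by_contra h
    push_neg at h
    obtain ⟨hS1, hT1⟩ := h
    obtain ⟨x1, hx1, x2, hx2, hx⟩ := Finset.one_lt_card.mp hS1
    obtain ⟨y1, hy1, y2, hy2, hy⟩ := Finset.one_lt_card.mp hT1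
    exact noC4 x1 x2 y1 y2 (hST.2.2 x1 hx1 y1 hy1) (hST.2.2 x1 hx1 y2 hy2)
      (hST.2.2 x2 hx2 y1 hy1) (hST.2.2 x2 hx2 y2 hy2) hx hy
  -- existence of bicliques
  have bsB : Bisize G (G.B.card, 0) :=
    ⟨G.B, ∅, ⟨Finset.Subset.refl _, Finset.empty_subset _,
      fun b hb w hw => absurd hw (Finset.notMem_empty w)⟩, rfl, Finset.card_empty⟩
  have bsW : Bisize G (0, G.W.card) :=
    ⟨∅, G.W, ⟨Finset.empty_subset _, Finset.Subset.refl _,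
      fun b hb w hw => absurd hb (Finset.notMem_empty b)⟩, Finset.card_empty, rfl⟩
  have exB : ∃ x : Fin n, x ∈ G.B ∧ 0 < (x:ℕ) ∧ (x:ℕ) < n - 1 := by
    by_contra h
    push_neg at h
    have hsub : G.B ⊆ {(⟨0, by omega⟩ : Fin n), ⟨n-1, by omega⟩} := by
      intro x hx
      have := h x hx
      simp only [Finset.mem_insert, Finset.mem_singleton, Fin.ext_iff]
      have := x.isLt
      omega
    have := Finset.card_le_card hsub
    have h2 : ({(⟨0, by omega⟩ : Fin n), ⟨n-1, by omega⟩} : Finset (Fin n)).card ≤ 2 :=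
      Finset.card_insert_le _ _
    omega
  have exW : ∃ y : Fin n, y ∈ G.W ∧ 0 < (y:ℕ) ∧ (y:ℕ) < n - 1 := by
    by_contra h
    push_neg at h
    have hsub : G.W ⊆ {(⟨0, by omega⟩ : Fin n), ⟨n-1, by omega⟩} := by
      intro x hx
      have := h x hx
      simp only [Finset.mem_insert, Finset.mem_singleton, Fin.ext_iff]
      have := x.isLt
      omega
    have := Finset.card_le_card hsub
    have h2 : ({(⟨0, by omega⟩ : Fin n), ⟨n-1, by omega⟩} : Finset (Fin n)).card ≤ 2 :=
      Finset.card_insert_le _ _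
    omega
  have bs12 : Bisize G (1, 2) := by
    obtain ⟨x, hxB, hx0, hxn⟩ := exB
    have hxr : (x:ℕ) % 2 = r := (hBdef x).mp hxB
    set y1 : Fin n := ⟨(x:ℕ) - 1, by omega⟩ with hy1d
    set y2 : Fin n := ⟨(x:ℕ) + 1, by omega⟩ with hy2d
    have hv1 : (y1:ℕ) = (x:ℕ) - 1 := rfl
    have hv2 : (y2:ℕ) = (x:ℕ) + 1 := rfl
    have hne : y1 ≠ y2 := by
      intro h; rw [Fin.ext_iff, hv1, hv2] at h; omega
    have e1 : (x, y1) ∈ G.E := hE2 x y1 hxr (by omega)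
    have e2 : (x, y2) ∈ G.E := hE2 x y2 hxr (by omega)
    refine ⟨{x}, {y1, y2}, ⟨by simpa using hxB, ?_, ?_⟩, by simp, ?_⟩
    · intro y hy
      simp only [Finset.mem_insert, Finset.mem_singleton] at hy
      rcases hy with rfl | rfl <;> rw [hWdef] <;> omega
    · intro b hb w hw
      simp only [Finset.mem_singleton] at hb
      simp only [Finset.mem_insert, Finset.mem_singleton] at hw
      subst hb
      rcases hw with rfl | rfl
      · exact e1
      · exact e2
    · rw [Finset.card_insert_of_notMem (by simpa using hne), Finset.card_singleton]
  have bs21 : Bisize G (2, 1) := by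
    obtain ⟨y, hyW, hy0, hyn⟩ := exW
    have hyr : ¬ ((y:ℕ) % 2 = r) := (hWdef y).mp hyW
    set x1 : Fin n := ⟨(y:ℕ) - 1, by omega⟩ with hx1d
    set x2 : Fin n := ⟨(y:ℕ) + 1, by omega⟩ with hx2d
    have hv1 : (x1:ℕ) = (y:ℕ) - 1 := rfl
    have hv2 : (x2:ℕ) = (y:ℕ) + 1 := rfl
    have hne : x1 ≠ x2 := by
      intro h; rw [Fin.ext_iff, hv1, hv2] at h; omega
    have e1 : (x1, y) ∈ G.E := hE2 x1 y (by omega) (by omega)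
    have e2 : (x2, y) ∈ G.E := hE2 x2 y (by omega) (by omega)
    refine ⟨{x1, x2}, {y}, ⟨?_, by simpa using hyW, ?_⟩, ?_, by simp⟩
    · intro x hx
      simp only [Finset.mem_insert, Finset.mem_singleton] at hx
      rcases hx with rfl | rfl <;> rw [hBdef] <;> omega
    · intro b hb w hw
      simp only [Finset.mem_singleton] at hw
      simp only [Finset.mem_insert, Finset.mem_singleton] at hb
      subst hw
      rcases hb with rfl | rfl
      · exact e1
      · exact e2
    · rw [Finset.card_insert_of_notMem (by simpa using hne), Finset.card_singleton]
  -- the four maxbisizes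
  have max12 : MaxBisize G (1, 2) := by
    refine ⟨bs12, fun q hq hd => ?_⟩
    obtain ⟨hd1, hd2⟩ := hd
    obtain ⟨S, T, hST, hS, hT⟩ := hq
    have hSne : S.Nonempty := Finset.card_pos.mp (by omega)
    have hTne : T.Nonempty := Finset.card_pos.mp (by omega)
    have h1 := hT2 S T hST hSne
    have h2 := hno22 S T hST
    have : q.1 = 1 ∧ q.2 = 2 := by omega
    exact Prod.ext_iff.mpr ⟨this.1, this.2⟩
  have max21 : MaxBisize G (2, 1) := by
    refine ⟨bs21, fun q hq hd => ?_⟩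
    obtain ⟨hd1, hd2⟩ := hd
    obtain ⟨S, T, hST, hS, hT⟩ := hq
    have hSne : S.Nonempty := Finset.card_pos.mp (by omega)
    have hTne : T.Nonempty := Finset.card_pos.mp (by omega)
    have h1 := hS2 S T hST hTne
    have h2 := hno22 S T hST
    have : q.1 = 2 ∧ q.2 = 1 := by omega
    exact Prod.ext_iff.mpr ⟨this.1, this.2⟩
  have maxB : MaxBisize G (G.B.card, 0) := by
    refine ⟨bsB, fun q hq hd => ?_⟩
    obtain ⟨hd1, hd2⟩ := hd
    simp only at hd1 hd2
    obtain ⟨S, T, hST, hS, hT⟩ := hq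
    have hT0 : T = ∅ := by
      by_contra h
      have hTne : T.Nonempty := Finset.nonempty_iff_ne_empty.mpr h
      have := hS2 S T hST hTne
      omega
    have hle : S.card ≤ G.B.card := Finset.card_le_card hST.1
    have : q.1 = G.B.card ∧ q.2 = 0 := by
      subst hT0
      simp only [Finset.card_empty] at hT
      omega
    exact Prod.ext_iff.mpr ⟨this.1, this.2⟩
  have maxW : MaxBisize G (0, G.W.card) := by
    refine ⟨bsW, fun q hq hd => ?_⟩
    obtain ⟨hd1, hd2⟩ := hd
    simp only at hd1 hd2
    obtain ⟨S, T, hST, hS, hT⟩ := hq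
    have hS0 : S = ∅ := by
      by_contra h
      have hSne : S.Nonempty := Finset.nonempty_iff_ne_empty.mpr h
      have := hT2 S T hST hSne
      omega
    have hle : T.card ≤ G.W.card := Finset.card_le_card hST.2.1
    have : q.1 = 0 ∧ q.2 = G.W.card := by
      subst hS0
      simp only [Finset.card_empty] at hS
      omega
    exact Prod.ext_iff.mpr ⟨this.1, this.2⟩
  ext p
  simp only [DD, Set.mem_setOf_eq, Set.mem_insert_iff, Set.mem_singleton_iff]
  constructor
  · rintro ⟨hp, hmax⟩
    obtain ⟨S, T, hST, hS, hT⟩ := hp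
    rcases Nat.eq_zero_or_pos p.2 with h2 | h2
    · right; right; left
      refine (hmax _ bsB ⟨?_, ?_⟩).symm
      · exact hS ▸ Finset.card_le_card hST.1
      · omega
    rcases Nat.eq_zero_or_pos p.1 with h1 | h1
    · right; right; right
      refine (hmax _ bsW ⟨?_, ?_⟩).symm
      · omega
      · exact hT ▸ Finset.card_le_card hST.2.1
    have hSne : S.Nonempty := Finset.card_pos.mp (by omega)
    have hTne : T.Nonempty := Finset.card_pos.mp (by omega)
    have hA := hT2 S T hST hSne
    have hB2 := hS2 S T hST hTne
    have hC := hno22 S T hST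
    rcases Nat.lt_or_ge p.1 2 with hp1 | hp1
    · left
      exact (hmax _ bs12 ⟨by omega, by omega⟩).symm
    · right; left
      exact (hmax _ bs21 ⟨by omega, by omega⟩).symm
  · rintro (rfl | rfl | rfl | rfl)
    · exact max12
    · exact max21
    · exact maxB
    · exact maxW
end

section
/- Let G be the bipartite complement of a path on n = b + w vertices (colored alternately along the path), having b > 2 black vertices and w > 2 white vertices. Then D(G) = {(b, 0), (0, w)} ∪ {(b', w') | b' + w' = ⌊n/2⌋, 1 ≤ b' ≤ b, 1 ≤ w' ≤ w}. -/
open Finset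

variable {V : Type} [DecidableEq V]

/-- Auxiliary: a finset of naturals of constant parity bounded by `k` has at most
`k / 2 + 1` elements. -/
lemma parity_card_le (k : ℕ) (T : Finset ℕ)
    (hpar : ∀ t ∈ T, ∀ t' ∈ T, t % 2 = t' % 2)
    (hlt : ∀ t ∈ T, t ≤ k) : T.card ≤ k / 2 + 1 := by
  have h : T.card ≤ (Finset.range (k / 2 + 1)).card := by
    apply Finset.card_le_card_of_injOn (fun t => t / 2)
    · intro t ht
      simp only [Finset.mem_coe, Finset.mem_range]
      have := hlt t ht; omega
    · intro a ha b hb hab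
      have := hpar a ha b hb
      simp only at hab
      omega
  simpa using h

/-- Auxiliary step of the key bound, assuming the maximal element lies in `S`. -/
lemma key_step (n : ℕ) (S T : Finset ℕ)
    (hS : ∀ s ∈ S, ∀ s' ∈ S, s % 2 = s' % 2)
    (hT : ∀ t ∈ T, ∀ t' ∈ T, t % 2 = t' % 2)
    (hST : ∀ s ∈ S, ∀ t ∈ T, s % 2 ≠ t % 2 ∧ s + 1 ≠ t ∧ t + 1 ≠ s)
    (hlt : ∀ u ∈ S ∪ T, u < n)
    (hT0 : T.Nonempty)
    (u : ℕ) (huS : u ∈ S) (hun : u + 1 = n)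
    (IH : ∀ m, m < n → ∀ S' T' : Finset ℕ,
      (∀ s ∈ S', ∀ s' ∈ S', s % 2 = s' % 2) →
      (∀ t ∈ T', ∀ t' ∈ T', t % 2 = t' % 2) →
      (∀ s ∈ S', ∀ t ∈ T', s % 2 ≠ t % 2 ∧ s + 1 ≠ t ∧ t + 1 ≠ s) →
      (∀ v ∈ S' ∪ T', v < m) → S'.Nonempty → T'.Nonempty →
      2 * (S'.card + T'.card) ≤ m) :
    2 * (S.card + T.card) ≤ n := by
  -- every element of T is ≤ n - 4
  have hTbnd : ∀ t ∈ T, t + 4 ≤ n := by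
    intro t ht
    obtain ⟨hp, h1, h2⟩ := hST u huS t ht
    have htn : t < n := hlt t (Finset.mem_union_right _ ht)
    omega
  have hScard : 1 ≤ S.card := Finset.card_pos.mpr ⟨u, huS⟩
  by_cases hS1 : S.card = 1
  · -- S = {u}
    obtain ⟨t0, ht0⟩ := hT0
    have hn4 : 4 ≤ n := by have := hTbnd t0 ht0; omega
    have hTc : T.card ≤ (n - 4) / 2 + 1 :=
      parity_card_le (n - 4) T hT (fun t ht => by have := hTbnd t ht; omega)
    omega
  · -- S has at least two elements; remove u and recurse on n - 2
    have hS2 : 2 ≤ S.card := by omega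
    have hS'0 : (S.erase u).Nonempty := by
      rw [← Finset.card_pos, Finset.card_erase_of_mem huS]; omega
    have hbnd' : ∀ v ∈ (S.erase u) ∪ T, v < n - 2 := by
      intro v hv
      rcases Finset.mem_union.mp hv with hv | hv
      · have hvu := Finset.ne_of_mem_erase hv
        have hvS := Finset.mem_of_mem_erase hv
        have := hS v hvS u huS
        have := hlt v (Finset.mem_union_left _ hvS)
        omega
      · have := hTbnd v hv; omega
    have := IH (n - 2) (by omega) (S.erase u) T
      (fun s hs s' hs' => hS s (Finset.mem_of_mem_erase hs) s' (Finset.mem_of_mem_erase hs'))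
      hT
      (fun s hs t ht => hST s (Finset.mem_of_mem_erase hs) t ht)
      hbnd' hS'0 hT0
    rw [Finset.card_erase_of_mem huS] at this
    omega

/-- Key combinatorial bound: if `S` and `T` are nonempty finsets of naturals below `n`,
each of constant parity, with opposite parities across, and no cross pair at distance 1,
then `2 * (|S| + |T|) ≤ n`. -/
lemma key_bound : ∀ n : ℕ, ∀ S T : Finset ℕ,
    (∀ s ∈ S, ∀ s' ∈ S, s % 2 = s' % 2) →
    (∀ t ∈ T, ∀ t' ∈ T, t % 2 = t' % 2) →
    (∀ s ∈ S, ∀ t ∈ T, s % 2 ≠ t % 2 ∧ s + 1 ≠ t ∧ t + 1 ≠ s) →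
    (∀ u ∈ S ∪ T, u < n) → S.Nonempty → T.Nonempty →
    2 * (S.card + T.card) ≤ n := by
  intro n
  induction n using Nat.strong_induction_on with
  | _ n IH =>
    intro S T hS hT hST hlt hS0 hT0
    by_cases hmax : ∀ u ∈ S ∪ T, u + 1 < n
    · have hn1 : 1 ≤ n := by
        obtain ⟨s0, hs0⟩ := hS0
        have := hlt s0 (Finset.mem_union_left _ hs0); omega
      exact le_trans
        (IH (n - 1) (by omega) S T hS hT hST
          (fun u hu => by have := hmax u hu; omega) hS0 hT0)
        (by omega)
    · push_neg at hmax
      obtain ⟨u, hu, hun⟩ := hmax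
      have hun' : u + 1 = n := by
        have := hlt u hu; omega
      rcases Finset.mem_union.mp hu with huS | huT
      · exact key_step n S T hS hT hST hlt hT0 u huS hun' IH
      · have h := key_step n T S hT hS
          (fun t ht s hs => by
            obtain ⟨h1, h2, h3⟩ := hST s hs t ht
            exact ⟨fun he => h1 he.symm, h3, h2⟩)
          (fun v hv => hlt v (by
            rcases Finset.mem_union.mp hv with h | h
            · exact Finset.mem_union_right _ h
            · exact Finset.mem_union_left _ h))
          hS0 u huT hun'
          (fun m hm S' T' h1 h2 h3 h4 h5 h6 => by
            have := IH m hm T' S'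
              (h2) (h1)
              (fun t ht s hs => by
                obtain ⟨a, b, c⟩ := h3 s hs t ht
                exact ⟨fun he => a he.symm, c, b⟩)
              (fun v hv => h4 v (by
                rcases Finset.mem_union.mp hv with h | h
                · exact Finset.mem_union_right _ h
                · exact Finset.mem_union_left _ h))
              h6 h5
            omega)
        omega

/-- Auxiliary: an arithmetic-progression finset in `Fin n`. -/
lemma arith_finset (n o k : ℕ) (h : o + 2 * k ≤ n + 1) :
    ∃ S : Finset (Fin n), S.card = k ∧
      ∀ i : Fin n, i ∈ S ↔ ∃ j < k, (i : ℕ) = o + 2 * j := by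
  refine ⟨(Finset.range k).attach.image
    (fun j => (⟨o + 2 * j.1, by
      have := j.2; rw [Finset.mem_range] at this; omega⟩ : Fin n)), ?_, ?_⟩
  · rw [Finset.card_image_of_injective _ ?_, Finset.card_attach, Finset.card_range]
    intro a b hab
    apply Subtype.ext
    have : o + 2 * a.1 = o + 2 * b.1 := congrArg Fin.val hab
    omega
  · intro i
    simp only [Finset.mem_image, Finset.mem_attach, true_and, Subtype.exists,
      Finset.mem_range]
    constructor
    · rintro ⟨j, hj, rfl⟩
      exact ⟨j, hj, rfl⟩
    · rintro ⟨j, hj, hij⟩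
      exact ⟨j, hj, Fin.ext hij.symm⟩

/-- Characterization of the bisizes of the bipartite complement of a path. -/
lemma bisize_compl_path (n r : ℕ) (hr : r ≤ 1) (G : BipGraph (Fin n))
    (hG : G = bipCompl (pathGraph n r)) (p : ℕ × ℕ) :
    Bisize G p ↔ (p.2 = 0 ∧ p.1 ≤ G.B.card) ∨ (p.1 = 0 ∧ p.2 ≤ G.W.card) ∨
      (1 ≤ p.1 ∧ 1 ≤ p.2 ∧ p.1 ≤ G.B.card ∧ p.2 ≤ G.W.card ∧ p.1 + p.2 ≤ n / 2) := by
  subst hG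
  have hBmem : ∀ i : Fin n, i ∈ (bipCompl (pathGraph n r)).B ↔ (i : ℕ) % 2 = r := by
    intro i; simp [bipCompl, pathGraph]
  have hWmem : ∀ i : Fin n, i ∈ (bipCompl (pathGraph n r)).W ↔ (i : ℕ) % 2 ≠ r := by
    intro i; simp [bipCompl, pathGraph]
  have hEmem : ∀ s t : Fin n, (s, t) ∈ (bipCompl (pathGraph n r)).E ↔
      ((s : ℕ) % 2 = r ∧ (t : ℕ) % 2 ≠ r ∧
        ¬((s : ℕ) % 2 = r ∧ ((s : ℕ) + 1 = (t : ℕ) ∨ (t : ℕ) + 1 = (s : ℕ)))) := by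
    intro s t
    simp [bipCompl, pathGraph, Set.mem_setOf_eq]
  constructor
  · rintro ⟨S, T, ⟨hSB, hTW, hE⟩, hc1, hc2⟩
    have hp1 : p.1 ≤ (bipCompl (pathGraph n r)).B.card := hc1 ▸ Finset.card_le_card hSB
    have hp2 : p.2 ≤ (bipCompl (pathGraph n r)).W.card := hc2 ▸ Finset.card_le_card hTW
    rcases S.eq_empty_or_nonempty with hSe | hSne
    · subst hSe
      exact Or.inr (Or.inl ⟨by simp at hc1; omega, hp2⟩)
    rcases T.eq_empty_or_nonempty with hTe | hTne
    · subst hTe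
      exact Or.inl ⟨by simp at hc2; omega, hp1⟩
    refine Or.inr (Or.inr ⟨?_, ?_, hp1, hp2, ?_⟩)
    · rw [← hc1]; exact Finset.card_pos.mpr hSne
    · rw [← hc2]; exact Finset.card_pos.mpr hTne
    · -- use key_bound on images
      have hinj : Function.Injective (Fin.val : Fin n → ℕ) := Fin.val_injective
      have hkey := key_bound n (S.image Fin.val) (T.image Fin.val) ?_ ?_ ?_ ?_
        (hSne.image _) (hTne.image _)
      · rw [Finset.card_image_of_injective _ hinj,
          Finset.card_image_of_injective _ hinj, hc1, hc2] at hkey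
        omega
      · rintro s hs s' hs'
        simp only [Finset.mem_image] at hs hs'
        obtain ⟨a, ha, rfl⟩ := hs
        obtain ⟨a', ha', rfl⟩ := hs'
        have h1 := (hBmem a).mp (hSB ha)
        have h2 := (hBmem a').mp (hSB ha')
        omega
      · rintro t ht t' ht'
        simp only [Finset.mem_image] at ht ht'
        obtain ⟨a, ha, rfl⟩ := ht
        obtain ⟨a', ha', rfl⟩ := ht'
        have h1 := (hWmem a).mp (hTW ha)
        have h2 := (hWmem a').mp (hTW ha')
        omega
      · rintro s hs t ht
        simp only [Finset.mem_image] at hs ht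
        obtain ⟨a, ha, rfl⟩ := hs
        obtain ⟨c, hc, rfl⟩ := ht
        have := (hEmem a c).mp (hE a ha c hc)
        obtain ⟨h1, h2, h3⟩ := this
        refine ⟨by omega, ?_, ?_⟩ <;> intro hcon <;> exact h3 ⟨h1, by omega⟩
      · intro u hu
        rcases Finset.mem_union.mp hu with h | h <;>
          · simp only [Finset.mem_image] at h
            obtain ⟨a, _, rfl⟩ := h
            exact a.isLt
  · rintro (⟨h0, hle⟩ | ⟨h0, hle⟩ | ⟨h1, h2, hb, hw, hsum⟩)
    · obtain ⟨S, hS, hcard⟩ := Finset.exists_subset_card_eq hle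
      exact ⟨S, ∅, ⟨hS, Finset.empty_subset _,
        fun b hb w hw => absurd hw (Finset.notMem_empty w)⟩, hcard, by simp [h0]⟩
    · obtain ⟨T, hT, hcard⟩ := Finset.exists_subset_card_eq hle
      exact ⟨∅, T, ⟨Finset.empty_subset _, hT,
        fun b hb w hw => absurd hb (Finset.notMem_empty b)⟩, by simp [h0], hcard⟩
    · -- mixed construction
      have h2n : 2 * (n / 2) ≤ n := by omega
      interval_cases r
      · -- blacks are even; blacks first then whites
        obtain ⟨S, hScard, hSmem⟩ := arith_finset n 0 p.1 (by omega)
        obtain ⟨T, hTcard, hTmem⟩ := arith_finset n (2 * p.1 + 1) p.2 (by omega)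
        refine ⟨S, T, ⟨?_, ?_, ?_⟩, hScard, hTcard⟩
        · intro i hi
          obtain ⟨j, hj, hij⟩ := (hSmem i).mp hi
          exact (hBmem i).mpr (by omega)
        · intro i hi
          obtain ⟨j, hj, hij⟩ := (hTmem i).mp hi
          exact (hWmem i).mpr (by omega)
        · intro s hs t ht
          obtain ⟨j, hj, hsj⟩ := (hSmem s).mp hs
          obtain ⟨j', hj', htj⟩ := (hTmem t).mp ht
          exact (hEmem s t).mpr (by omega)
      · -- blacks are odd; whites first then blacks
        obtain ⟨T, hTcard, hTmem⟩ := arith_finset n 0 p.2 (by omega)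
        obtain ⟨S, hScard, hSmem⟩ := arith_finset n (2 * p.2 + 1) p.1 (by omega)
        refine ⟨S, T, ⟨?_, ?_, ?_⟩, hScard, hTcard⟩
        · intro i hi
          obtain ⟨j, hj, hij⟩ := (hSmem i).mp hi
          exact (hBmem i).mpr (by omega)
        · intro i hi
          obtain ⟨j, hj, hij⟩ := (hTmem i).mp hi
          exact (hWmem i).mpr (by omega)
        · intro s hs t ht
          obtain ⟨j, hj, hsj⟩ := (hSmem s).mp hs
          obtain ⟨j', hj', htj⟩ := (hTmem t).mp ht
          exact (hEmem s t).mpr (by omega)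

/-- Theorem 19 of the paper: maxbisizes of the bipartite complement
of a path. -/
theorem maxbisize_compl_path (n r : ℕ) (hr : r ≤ 1) (G : BipGraph (Fin n))
    (hG : G = bipCompl (pathGraph n r))
    (hn : n = G.B.card + G.W.card)
    (hb : 2 < G.B.card) (hw : 2 < G.W.card) :
    DD G = {(G.B.card, 0), (0, G.W.card)} ∪
      {p : ℕ × ℕ | p.1 + p.2 = n / 2 ∧ 1 ≤ p.1 ∧ p.1 ≤ G.B.card ∧
        1 ≤ p.2 ∧ p.2 ≤ G.W.card} := by
  have hbs := fun q => bisize_compl_path n r hr G hG q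
  have hBmem : ∀ i : Fin n, i ∈ G.B ↔ (i : ℕ) % 2 = r := by
    subst hG; intro i; simp [bipCompl, pathGraph]
  have hWmem : ∀ i : Fin n, i ∈ G.W ↔ (i : ℕ) % 2 ≠ r := by
    subst hG; intro i; simp [bipCompl, pathGraph]
  have hb_le : G.B.card ≤ (n + 1) / 2 := by
    have h : G.B.card ≤ (Finset.range ((n + 1) / 2)).card := by
      apply Finset.card_le_card_of_injOn (fun i : Fin n => (i : ℕ) / 2)
      · intro i hi
        simp only [Finset.mem_coe, Finset.mem_range]
        have := i.isLt; omega
      · intro a ha b hb hab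
        rw [Finset.mem_coe, hBmem] at ha hb
        simp only at hab
        exact Fin.ext (by omega)
    simpa using h
  have hw_le : G.W.card ≤ (n + 1) / 2 := by
    have h : G.W.card ≤ (Finset.range ((n + 1) / 2)).card := by
      apply Finset.card_le_card_of_injOn (fun i : Fin n => (i : ℕ) / 2)
      · intro i hi
        simp only [Finset.mem_coe, Finset.mem_range]
        have := i.isLt; omega
      · intro a ha b hb hab
        rw [Finset.mem_coe, hWmem] at ha hb
        simp only at hab
        have h2a : (a : ℕ) % 2 ≤ 1 := by omega
        exact Fin.ext (by omega)
    simpa using h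
  have hnb : n / 2 ≤ G.B.card := by omega
  have hnw : n / 2 ≤ G.W.card := by omega
  ext p
  simp only [DD, Set.mem_setOf_eq, Set.mem_union, Set.mem_insert_iff,
    Set.mem_singleton_iff]
  constructor
  · rintro ⟨hp, hmax⟩
    rcases (hbs p).mp hp with ⟨h0, hle⟩ | ⟨h0, hle⟩ | ⟨h1, h2, hpb, hpw, hsum⟩
    · have hq : Bisize G (G.B.card, 0) := (hbs _).mpr (Or.inl ⟨rfl, le_rfl⟩)
      exact Or.inl (Or.inl (hmax _ hq ⟨hle, by omega⟩).symm)
    · have hq : Bisize G (0, G.W.card) := (hbs _).mpr (Or.inr (Or.inl ⟨rfl, le_rfl⟩))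
      exact Or.inl (Or.inr (hmax _ hq ⟨by omega, hle⟩).symm)
    · right
      refine ⟨?_, h1, hpb, h2, hpw⟩
      set q1 := min G.B.card (n / 2 - p.2) with hq1
      have hq : Bisize G (q1, n / 2 - q1) :=
        (hbs _).mpr (Or.inr (Or.inr
          ⟨show 1 ≤ q1 by omega, show 1 ≤ n / 2 - q1 by omega,
           show q1 ≤ G.B.card by omega, show n / 2 - q1 ≤ G.W.card by omega,
           show q1 + (n / 2 - q1) ≤ n / 2 by omega⟩))
      have heq := hmax _ hq ⟨show p.1 ≤ q1 by omega, show p.2 ≤ n / 2 - q1 by omega⟩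
      have e1 : q1 = p.1 := congrArg Prod.fst heq
      have e2 : n / 2 - q1 = p.2 := congrArg Prod.snd heq
      omega
  · rintro ((heq | heq) | ⟨hsum, h1, hpb, h2, hpw⟩)
    · subst heq
      refine ⟨(hbs _).mpr (Or.inl ⟨rfl, le_rfl⟩), ?_⟩
      intro q hq hdom
      obtain ⟨hd1, hd2⟩ := hdom
      have hd1' : G.B.card ≤ q.1 := hd1
      rcases (hbs q).mp hq with ⟨a1, a2⟩ | ⟨a1, a2⟩ | ⟨a1, a2, a3, a4, a5⟩
      · exact Prod.ext_iff.mpr ⟨le_antisymm a2 hd1', a1⟩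
      · exfalso; omega
      · exfalso; omega
    · subst heq
      refine ⟨(hbs _).mpr (Or.inr (Or.inl ⟨rfl, le_rfl⟩)), ?_⟩
      intro q hq hdom
      obtain ⟨hd1, hd2⟩ := hdom
      have hd2' : G.W.card ≤ q.2 := hd2
      rcases (hbs q).mp hq with ⟨a1, a2⟩ | ⟨a1, a2⟩ | ⟨a1, a2, a3, a4, a5⟩
      · exfalso; omega
      · exact Prod.ext_iff.mpr ⟨a1, le_antisymm a2 hd2'⟩
      · exfalso; omega
    · refine ⟨(hbs p).mpr (Or.inr (Or.inr ⟨h1, h2, hpb, hpw, by omega⟩)), ?_⟩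
      intro q hq hdom
      obtain ⟨hd1, hd2⟩ := hdom
      rcases (hbs q).mp hq with ⟨a1, a2⟩ | ⟨a1, a2⟩ | ⟨a1, a2, a3, a4, a5⟩
      · exfalso; omega
      · exfalso; omega
      · exact Prod.ext_iff.mpr ⟨by omega, by omega⟩
end
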